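/- The dual of the cone Lf_Q with respect to the differential inner product is the cone of nonnegative even quartics: (Lf_Q)*_d = Pos_Q. Equivalently, for every f ∈ Q and every v ∈ ℝ^n one has ⟨f, pr_Q((v_1x_1+…+v_nx_n)⁴)⟩_d = 24·f(v), so f ∈ (Lf_Q)*_d if and only if f(x) ≥ 0 for all x ∈ ℝ^n. -/

import Mathlib

open MeasureTheory Finset

noncomputable section

/-- The space `Q` of even quartics, represented by symmetric coefficient matrices
`a : Fin n → Fin n → ℝ` (the quartic being `∑ i j, a i j * x i ^ 2 * x j ^ 2`). -/
def symSub (n : ℕ) : Submodule ℝ (Fin n → Fin n → ℝ) where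
  carrier := {a | ∀ i j, a i j = a j i}
  add_mem' := by
    intro a b ha hb i j
    simp only [Pi.add_apply, ha i j, hb i j]
  zero_mem' := by intro i j; rfl
  smul_mem' := by
    intro c a ha i j
    simp only [Pi.smul_apply, smul_eq_mul, ha i j]

/-- The even quartic form corresponding to a symmetric coefficient matrix. -/
def qfun {n : ℕ} (a : symSub n) (x : EuclideanSpace ℝ (Fin n)) : ℝ :=
  ∑ i, ∑ j, a.1 i j * (x i)^2 * (x j)^2

/-- The element of `Q` corresponding to `r(x) = (x_1^2 + ... + x_n^2)^2`. -/
def rQ (n : ℕ) : symSub n := ⟨fun _ _ => 1, fun _ _ => rfl⟩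

/-- The section `K~ = {f ∈ M : f + r ∈ K}` of a cone `K ⊆ Q`. -/
def sect {n : ℕ} (σ : Measure (EuclideanSpace ℝ (Fin n))) (K : Set (symSub n)) :
    Set (symSub n) :=
  {a | (∫ x, qfun a x ∂σ) = 0 ∧ a + rQ n ∈ K}

/-- The volume radius of a subset of `M`, computed through a linear isometry `ψ`
of `ℝ^(dim M)` (with Lebesgue measure) onto `M`. -/
def vrad {n d : ℕ} (ψ : EuclideanSpace ℝ (Fin d) →ₗ[ℝ] symSub n)
    (C : Set (symSub n)) : ℝ :=
  ((volume (⇑ψ ⁻¹' C)).toReal /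
    (volume (Metric.closedBall (0 : EuclideanSpace ℝ (Fin d)) 1)).toReal) ^ ((1:ℝ)/(d:ℝ))

/-- The differential inner product on `Q`:
`⟨f,g⟩_d = 24 ∑ i, a i i * b i i + 8 ∑_{i ≠ j} a i j * b i j`. -/
def dInner {n : ℕ} (a b : symSub n) : ℝ :=
  24 * ∑ i, a.1 i i * b.1 i i + 8 * ∑ i, ∑ j ∈ Finset.univ.erase i, a.1 i j * b.1 i j

/-- The dual cone of `L ⊆ Q` with respect to the differential inner product. -/
def dualD {n : ℕ} (L : Set (symSub n)) : Set (symSub n) :=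
  {a | ∀ b ∈ L, 0 ≤ dInner a b}

/-- The dual cone of `L ⊆ Q` with respect to the `L²` inner product
`⟨f,g⟩ = ∫_{S^{n-1}} f g dσ`. -/
def dualL2 {n : ℕ} (σ : Measure (EuclideanSpace ℝ (Fin n)))
    (L : Set (symSub n)) : Set (symSub n) :=
  {a | ∀ b ∈ L, 0 ≤ ∫ x, qfun a x * qfun b x ∂σ}

/-- `pr_Q(ℓ⁴)` for the linear form `ℓ = ∑ j, v j * x j`, as an element of `Q`:
the projection of `(∑ j, v j x j)⁴` keeping exactly the coefficients of the
monomials `x i² x j²` has coefficient matrix with diagonal entries `v i⁴` and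
off-diagonal entries `3 v i² v j²`. -/
def Pmat {n : ℕ} (v : Fin n → ℝ) : symSub n :=
  ⟨fun p q => if p = q then (v p)^4 else 3 * (v p)^2 * (v q)^2, by
    intro p q
    by_cases h : p = q
    · simp [h]
    · simp only [if_neg h, if_neg (Ne.symm h)]
      ring⟩

/-- `Lf_Q`: projections to `Q` of sums of fourth powers of linear forms. -/
def LfQ (n : ℕ) : Set (symSub n) :=
  {a | ∃ (k : ℕ) (w : Fin k → Fin n → ℝ), a = ∑ i, Pmat (w i)}

/-- `NN_Q`: even quartics with nonnegative coefficients. -/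
def NNQ (n : ℕ) : Set (symSub n) :=
  {a | ∀ i j, 0 ≤ a.1 i j}

/-- `Pos_Q`: nonnegative even quartics. -/
def PosQ (n : ℕ) : Set (symSub n) :=
  {a | ∀ x : EuclideanSpace ℝ (Fin n), 0 ≤ qfun a x}

/-!
Pairing with a fourth power of a linear form evaluates: `⟨f, pr_Q((v·x)⁴)⟩_d = 24 f(v)`, because
the off-diagonal coefficient `3 vᵢ² vⱼ²` of `pr_Q((v·x)⁴)` against the weight `8` of the
differential inner product contributes `24 aᵢⱼ vᵢ² vⱼ²`, exactly as the diagonal does. As `Lf_Q`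
is the convex cone generated by these projections and `⟨f, ·⟩_d` is additive, `f` is in the
dual cone iff `f(v) ≥ 0` for every `v`.
-/

section EvenQuartic

variable {n : ℕ}

lemma Pmat_apply_self (v : Fin n → ℝ) (i : Fin n) : (Pmat v).1 i i = v i ^ 4 :=
  if_pos rfl

lemma Pmat_apply_of_ne (v : Fin n → ℝ) {i j : Fin n} (h : i ≠ j) :
    (Pmat v).1 i j = 3 * v i ^ 2 * v j ^ 2 :=
  if_neg h

lemma Pmat_mem_LfQ (v : Fin n → ℝ) : Pmat v ∈ LfQ n :=
  ⟨1, fun _ => v, (Fin.sum_univ_one fun _ => Pmat v).symm⟩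

lemma dInner_Pmat (a : symSub n) (v : Fin n → ℝ) :
    dInner a (Pmat v) = 24 * ∑ i, ∑ j, a.1 i j * v i ^ 2 * v j ^ 2 := by
  rw [dInner, mul_sum, mul_sum, mul_sum, ← sum_add_distrib]
  refine sum_congr rfl fun i _ => ?_
  have hoff : 8 * ∑ j ∈ univ.erase i, a.1 i j * (Pmat v).1 i j
      = 24 * ∑ j ∈ univ.erase i, a.1 i j * v i ^ 2 * v j ^ 2 := by
    rw [mul_sum, mul_sum]
    refine sum_congr rfl fun j hj => ?_
    rw [Pmat_apply_of_ne v (ne_of_mem_erase hj).symm]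
    ring
  rw [hoff, Pmat_apply_self, ← add_sum_erase _ _ (mem_univ i)]
  ring

lemma dInner_Pmat_eq_qfun (a : symSub n) (v : Fin n → ℝ) :
    dInner a (Pmat v) = 24 * qfun a (WithLp.toLp 2 v) :=
  dInner_Pmat a v

lemma dInner_sum {ι : Type*} (a : symSub n) (s : Finset ι) (c : ι → symSub n) :
    dInner a (∑ k ∈ s, c k) = ∑ k ∈ s, dInner a (c k) := by
  have hcoe : ∀ p q, (∑ k ∈ s, c k : symSub n).1 p q = ∑ k ∈ s, (c k).1 p q := by
    intro p q
    simp only [Submodule.coe_sum, Finset.sum_apply]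
  simp only [dInner, hcoe, mul_sum, sum_add_distrib]
  congr 1
  · exact sum_comm
  · rw [sum_comm]
    exact sum_congr rfl fun i _ => sum_comm

theorem dualD_LfQ : dualD (LfQ n) = PosQ n := by
  ext a
  constructor
  · intro ha x
    have h := ha _ (Pmat_mem_LfQ x.ofLp)
    rw [dInner_Pmat_eq_qfun, WithLp.toLp_ofLp] at h
    linarith
  · rintro ha _ ⟨k, w, rfl⟩
    rw [dInner_sum]
    exact sum_nonneg fun i _ => by
      rw [dInner_Pmat_eq_qfun]
      exact mul_nonneg (by norm_num) (ha _)

end EvenQuartic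

theorem stmt16_general (n : ℕ) :
    dualD (LfQ n) = PosQ n ∧
    (∀ (a : symSub n) (v : Fin n → ℝ),
      dInner a (Pmat v) = 24 * ∑ i, ∑ j, a.1 i j * (v i)^2 * (v j)^2) ∧
    (∀ a : symSub n, a ∈ dualD (LfQ n) ↔
      ∀ x : EuclideanSpace ℝ (Fin n), 0 ≤ qfun a x) :=
  ⟨dualD_LfQ, dInner_Pmat, fun a => Set.ext_iff.mp dualD_LfQ a⟩

/-- `(Lf_Q)*_d = Pos_Q`; equivalently, for every `f ∈ Q` and
`v ∈ ℝⁿ` one has `⟨f, pr_Q((v·x)⁴)⟩_d = 24 f(v)`, so `f ∈ (Lf_Q)*_d` iff `f` is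
nonnegative on `ℝⁿ`. -/
theorem stmt16 (n : ℕ) (hn : 1 ≤ n) :
    dualD (LfQ n) = PosQ n ∧
    (∀ (a : symSub n) (v : Fin n → ℝ),
      dInner a (Pmat v) = 24 * ∑ i, ∑ j, a.1 i j * (v i)^2 * (v j)^2) ∧
    (∀ a : symSub n, a ∈ dualD (LfQ n) ↔
      ∀ x : EuclideanSpace ℝ (Fin n), 0 ≤ qfun a x) :=
  stmt16_general n
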